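/- arXiv:2401.02377 — 2 statements merged into one kernel-verified Lean document; each statement's English description precedes it below -/
import Mathlib

section
/- Let ℓ be an odd prime, r coprime to ℓ, R the multiplicative order of r mod ℓ, L = (ℓ-1)/R, and g a generator of (ℤ/ℓ)^×. Then the product over all odd a with 1 ≤ a ≤ ℓ-1 of (r - ζ_R^a) — where ζ_R = ζ_{ℓ-1}^L is a primitive R-th root of unity — equals (r^{R/2} + 1)^L if R is even, and (r^R - 1)^{L/2} if R is odd. -/
private lemma aux_shift {M : Type*} [CommMonoid M] (f : ℕ → M) (p : ℕ)
    (hf : ∀ k, f (k + p) = f k) : ∀ t k, f (p * t + k) = f k := by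
  intro t
  induction t with
  | zero => simp
  | succ t ih =>
    intro k
    have h1 : p * (t + 1) + k = (p * t + k) + p := by ring
    rw [h1, hf, ih]

private lemma aux_periodic {M : Type*} [CommMonoid M] (f : ℕ → M) (p t : ℕ)
    (hf : ∀ k, f (k + p) = f k) :
    ∏ k ∈ Finset.range (p * t), f k = (∏ k ∈ Finset.range p, f k) ^ t := by
  induction t with
  | zero => simp
  | succ t ih =>
    rw [Nat.mul_succ, Finset.prod_range_add, ih, pow_succ]
    congr 1
    exact Finset.prod_congr rfl fun k _ => aux_shift f p hf t k

/-- Let `ℓ` be an odd prime, `ℓ ∤ r`, `R` the multiplicative order of `r` mod `ℓ`,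
`L = (ℓ-1)/R`, and `ζ_R = ζ_{ℓ-1}^L` a primitive `R`-th root of unity in `ℂ`.  Then
`∏_{a odd, 1 ≤ a ≤ ℓ-1} (r - ζ_R^a)` equals `(r^(R/2) + 1)^L` if `R` is even and
`(r^R - 1)^(L/2)` if `R` is odd. -/
theorem stmt13 (ℓ r : ℕ) (hℓ : ℓ.Prime) (hodd : Odd ℓ) (hr : 0 < r) (hcop : ¬ ℓ ∣ r)
    (R L : ℕ) (hR : R = orderOf (r : ZMod ℓ)) (hL : R * L = ℓ - 1)
    (ζ : ℂ) (hζ : IsPrimitiveRoot ζ (ℓ - 1)) :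
    (Even R →
      ∏ a ∈ (Finset.Icc 1 (ℓ - 1)).filter (fun a => Odd a), ((r : ℂ) - (ζ ^ L) ^ a)
        = ((r : ℂ) ^ (R / 2) + 1) ^ L) ∧
    (Odd R →
      ∏ a ∈ (Finset.Icc 1 (ℓ - 1)).filter (fun a => Odd a), ((r : ℂ) - (ζ ^ L) ^ a)
        = ((r : ℂ) ^ R - 1) ^ (L / 2)) := by
  have hℓ2 : 2 ≤ ℓ := hℓ.two_le
  have hℓodd : ℓ % 2 = 1 := Nat.odd_iff.mp hodd
  have hℓ3 : 3 ≤ ℓ := by omega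
  set n : ℕ := ℓ - 1 with hn
  have hn2 : 2 ≤ n := by omega
  have hneven : n % 2 = 0 := by omega
  have hn0 : 0 < n := by omega
  have hRL : R * L = n := hL
  have hR0 : 0 < R := by
    rcases Nat.eq_zero_or_pos R with h | h
    · rw [h] at hRL; omega
    · exact h
  have hL0 : 0 < L := by
    rcases Nat.eq_zero_or_pos L with h | h
    · rw [h] at hRL; omega
    · exact h
  set ξ : ℂ := ζ ^ L with hξdef
  have hξ : IsPrimitiveRoot ξ R := hζ.pow hn0 (by rw [← hRL, Nat.mul_comm])
  -- reindex the product
  have hreindex : ∀ f : ℕ → ℂ,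
      ∏ a ∈ (Finset.Icc 1 (ℓ - 1)).filter (fun a => Odd a), f a
        = ∏ k ∈ Finset.range (n / 2), f (2 * k + 1) := by
    intro f
    refine Finset.prod_nbij' (fun a => (a - 1) / 2) (fun k => 2 * k + 1) ?_ ?_ ?_ ?_ ?_
    · intro a ha
      simp only [Finset.mem_filter, Finset.mem_Icc, Nat.odd_iff] at ha
      simp only [Finset.mem_range]
      omega
    · intro k hk
      simp only [Finset.mem_range] at hk
      simp only [Finset.mem_filter, Finset.mem_Icc, Nat.odd_iff]
      omega
    · intro a ha
      simp only [Finset.mem_filter, Finset.mem_Icc, Nat.odd_iff] at ha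
      show 2 * ((a - 1) / 2) + 1 = a
      omega
    · intro k hk
      simp only [Finset.mem_range] at hk
      show (2 * k + 1 - 1) / 2 = k
      omega
    · intro a ha
      simp only [Finset.mem_filter, Finset.mem_Icc, Nat.odd_iff] at ha
      show f a = f (2 * ((a - 1) / 2) + 1)
      congr 1
      omega
  -- key evaluation lemma
  have key : ∀ (m : ℕ) (μ c : ℂ), 0 < m → IsPrimitiveRoot μ m →
      ∏ k ∈ Finset.range m, ((r : ℂ) - μ ^ k * c) = (r : ℂ) ^ m - c ^ m := by
    intro m μ c hm hμ
    have h1 := X_pow_sub_C_eq_prod hμ hm (rfl : c ^ m = c ^ m)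
    have h2 := congrArg (Polynomial.eval (r : ℂ)) h1
    simpa [Polynomial.eval_prod] using h2.symm
  have hpow_eq : ∀ k : ℕ, (ξ ^ 2) ^ k * ξ = ξ ^ (2 * k + 1) := by
    intro k
    rw [← pow_mul, ← pow_succ]
  constructor
  · -- R even
    intro hReven
    obtain ⟨s, hs⟩ : ∃ s, R = 2 * s := by
      rcases hReven with ⟨s, hs⟩; exact ⟨s, by omega⟩
    have hs0 : 0 < s := by omega
    have hsplit : n / 2 = s * L := by
      have : 2 * (s * L) = n := by rw [← hRL, hs]; ring
      omega
    rw [hreindex, hsplit]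
    have hper : ∀ k, ((r : ℂ) - ξ ^ (2 * (k + s) + 1)) = ((r : ℂ) - ξ ^ (2 * k + 1)) := by
      intro k
      have he : 2 * (k + s) + 1 = (2 * k + 1) + R := by omega
      rw [he, pow_add, hξ.pow_eq_one, mul_one]
    rw [aux_periodic (fun k => (r : ℂ) - ξ ^ (2 * k + 1)) s L hper]
    have hμ : IsPrimitiveRoot (ξ ^ 2) s := hξ.pow hR0 hs
    have hneg : ξ ^ s = -1 := by
      have h2 : IsPrimitiveRoot (ξ ^ s) 2 := hξ.pow hR0 (by omega)
      exact h2.eq_neg_one_of_two_right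
    have hinner : ∏ k ∈ Finset.range s, ((r : ℂ) - ξ ^ (2 * k + 1))
        = (r : ℂ) ^ s + 1 := by
      have := key s (ξ ^ 2) ξ hs0 hμ
      simp only [hpow_eq] at this
      rw [this, hneg]
      ring
    have hs2 : R / 2 = s := by omega
    rw [hinner, hs2]
  · -- R odd
    intro hRodd
    have hRodd' : R % 2 = 1 := Nat.odd_iff.mp hRodd
    obtain ⟨t, ht⟩ : ∃ t, L = 2 * t := by
      have : Even (R * L) := by rw [hRL]; exact Nat.even_iff.mpr hneven
      rcases Nat.even_mul.mp this with h | h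
      · exact absurd (Nat.even_iff.mp h) (by omega)
      · rcases h with ⟨t, ht⟩; exact ⟨t, by omega⟩
    have hsplit : n / 2 = R * t := by
      have : 2 * (R * t) = n := by rw [← hRL, ht]; ring
      omega
    rw [hreindex, hsplit]
    have hper : ∀ k, ((r : ℂ) - ξ ^ (2 * (k + R) + 1)) = ((r : ℂ) - ξ ^ (2 * k + 1)) := by
      intro k
      have he : 2 * (k + R) + 1 = (2 * k + 1) + R * 2 := by omega
      rw [he, pow_add, pow_mul, hξ.pow_eq_one, one_pow, mul_one]
    rw [aux_periodic (fun k => (r : ℂ) - ξ ^ (2 * k + 1)) R t hper]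
    have hμ : IsPrimitiveRoot (ξ ^ 2) R := hξ.pow_of_coprime 2
      (Nat.prime_two.coprime_iff_not_dvd.mpr (by omega))
    have hinner : ∏ k ∈ Finset.range R, ((r : ℂ) - ξ ^ (2 * k + 1))
        = (r : ℂ) ^ R - 1 := by
      have := key R (ξ ^ 2) ξ hR0 hμ
      simp only [hpow_eq] at this
      rw [this, hξ.pow_eq_one]
    have ht2 : L / 2 = t := by omega
    rw [hinner, ht2]
end

section
/- Let A be a principally polarized abelian variety over a number field L with the standard Weil pairing e_n : A[n] × A[n] → μ_n, and let O be an order of a number field M acting on A with O stable under the Rosati involution a ↦ ā. Then for fixed P, Q ∈ A[n], the map O/n → ℤ/n, a ↦ e_n(P, a·Q), is ℤ-linear, and there exists a unique element 𝕖_n(P,Q) ∈ O*/n (where O* is the inverse different) with e_n(P, a·Q) = Tr_{M/ℚ}(𝕖_n(P,Q)·a) for all a ∈ O/n; moreover the resulting pairing 𝕖_n is skew-Hermitian: 𝕖_n(P,Q) = -conj(𝕖_n(Q,P)). -/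
/-!
Since the trace form of `M/ℚ` is nondegenerate and `O` is a lattice in `M`, every `ℤ`-linear
form on `O` is `a ↦ Tr(ε a)` for some `ε` in the codifferent. The form `a ↦ e(P, a Q)` with values
in `ℤ/n` lifts to `ℤ` because `O` is free, which gives existence; two representatives differ by an
element representing `0`, i.e. by an element of `n O*`. For the skew-Hermitian property,
adjointness and alternation give `e(Q, σ⁻¹(a) P) = -e(P, a Q)`, so `σ(𝕖(Q, P))` represents the
negative of `a ↦ e(P, a Q)`; here `σ⁻¹` preserves `O` because `σ` has finite order.
-/

open Module Submodule

theorem inv_smul_mem_of_forall_smul_mem {G α : Type*} [Group G] [Finite G] [MulAction G α]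
    {g : G} {S : Set α} (hS : ∀ x ∈ S, g • x ∈ S) : ∀ x ∈ S, g⁻¹ • x ∈ S := by
  have hpow (k : ℕ) : ∀ x ∈ S, g ^ k • x ∈ S := by
    induction k with
    | zero => simp
    | succ k ih => intro x hx; rw [pow_succ, mul_smul]; exact ih _ (hS x hx)
  obtain ⟨k, hk⟩ := mem_powers_iff_mem_zpowers.2 (inv_mem (Subgroup.mem_zpowers g))
  exact hk ▸ hpow k

theorem eq_neg_swap_of_alternating {G R : Type*} [AddCommGroup G] [AddCommGroup R]
    (e : G → G → R) (he1 : ∀ P Q T : G, e (P + Q) T = e P T + e Q T)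
    (he2 : ∀ P Q T : G, e P (Q + T) = e P Q + e P T) (halt : ∀ P : G, e P P = 0) (P Q : G) :
    e P Q = -e Q P := by
  have h := halt (P + Q)
  rw [he1, he2, he2, halt, halt, zero_add, add_zero] at h
  exact eq_neg_of_add_eq_zero_left h

section NumberField

variable {M : Type*} [Field M] [NumberField M]

theorem RingEquiv.symm_apply_mem_of_forall_apply_mem (σ : M ≃+* M) {S : Set M}
    (hS : ∀ x ∈ S, σ x ∈ S) : ∀ x ∈ S, σ.symm x ∈ S :=
  inv_smul_mem_of_forall_smul_mem (g := σ.toRatAlgEquiv) hS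

theorem Subalgebra.isLattice_toSubmodule (O : Subalgebra ℤ M) [Module.Finite ℤ O]
    (hO : ∀ x : M, ∃ (k : ℤ) (y : O), k ≠ 0 ∧ (k : M) * x = y) :
    (Subalgebra.toSubmodule O).IsLattice ℚ where
  fg := Module.Finite.iff_fg.mp ‹_›
  span_eq_top := by
    refine eq_top_iff.2 fun x _ ↦ ?_
    obtain ⟨k, y, hk, hky⟩ := hO x
    have hkM : (k : M) ≠ 0 := by exact_mod_cast hk
    have hx : x = (k : ℚ)⁻¹ • (y : M) := by
      rw [Rat.smul_def, ← hky]
      push_cast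
      field_simp
    exact hx ▸ Submodule.smul_mem _ _ (subset_span y.2)

theorem exists_trace_mul_eq_of_isLattice (L : Submodule ℤ M) [L.IsLattice ℚ] (ψ : L →ₗ[ℤ] ℤ) :
    ∃ ε : M, ∀ a : L, Algebra.trace ℚ M (ε * a) = ψ a := by
  let b := Free.chooseBasis ℤ L
  let B := Algebra.traceForm ℚ M
  let ε := (B.toDual (traceForm_nondegenerate ℚ M)).symm <|
    (b.extendOfIsLattice ℚ).constr ℚ fun i ↦ (ψ (b i) : ℚ)
  have hε : (B ε).restrictScalars ℤ ∘ₗ L.subtype = Algebra.linearMap ℤ ℚ ∘ₗ ψ := b.ext fun i ↦ by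
    simp only [LinearMap.comp_apply, LinearMap.restrictScalars_apply, subtype_apply, ε,
      LinearMap.BilinForm.apply_toDual_symm_apply, ← b.extendOfIsLattice_apply ℚ,
      Basis.constr_basis]
    rfl
  exact ⟨ε, fun a ↦ by simpa [B] using congr($hε a)⟩

theorem exists_trace_mul_intCast_eq_of_isLattice (L : Submodule ℤ M) [L.IsLattice ℚ] {n : ℕ}
    (φ : L →+ ZMod n) :
    ∃ ε : M, ∀ a : L, ∃ k : ℤ, Algebra.trace ℚ M (ε * a) = k ∧ (k : ZMod n) = φ a := by
  obtain ⟨ψ, hψ⟩ := projective_lifting_property (Int.castAddHom (ZMod n)).toIntLinearMap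
    φ.toIntLinearMap ZMod.intCast_surjective
  obtain ⟨ε, hε⟩ := exists_trace_mul_eq_of_isLattice L ψ
  exact ⟨ε, fun a ↦ ⟨ψ a, hε a, congr($hψ a)⟩⟩

def codifferent (O : Subalgebra ℤ M) : Set M :=
  {x | ∀ y ∈ O, ∃ k : ℤ, Algebra.trace ℚ M (x * y) = k}

def TraceRepresents (O : Subalgebra ℤ M) {n : ℕ} (f : O → ZMod n) (ε : M) : Prop :=
  ∀ a : O, ∃ k : ℤ, Algebra.trace ℚ M (ε * a) = k ∧ (k : ZMod n) = f a

namespace TraceRepresents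

variable {O : Subalgebra ℤ M} {n : ℕ} {f g : O → ZMod n} {ε ε' : M}

theorem mem_codifferent (h : TraceRepresents O f ε) : ε ∈ codifferent O :=
  fun y hy ↦ (h ⟨y, hy⟩).imp fun _ ↦ And.left

theorem add (h : TraceRepresents O f ε) (h' : TraceRepresents O g ε') :
    TraceRepresents O (f + g) (ε + ε') := by
  intro a
  obtain ⟨k, hk, hkf⟩ := h a
  obtain ⟨k', hk', hkg⟩ := h' a
  exact ⟨k + k', by rw [add_mul, map_add, hk, hk', Int.cast_add],
    by rw [Int.cast_add, hkf, hkg, Pi.add_apply]⟩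

theorem sub (h : TraceRepresents O f ε) (h' : TraceRepresents O g ε') :
    TraceRepresents O (f - g) (ε - ε') := by
  intro a
  obtain ⟨k, hk, hkf⟩ := h a
  obtain ⟨k', hk', hkg⟩ := h' a
  exact ⟨k - k', by rw [sub_mul, map_sub, hk, hk', Int.cast_sub],
    by rw [Int.cast_sub, hkf, hkg, Pi.sub_apply]⟩

theorem map_ringEquiv (σ : M ≃+* M) (hσ : ∀ x ∈ O, σ.symm x ∈ O) (h : TraceRepresents O f ε) :
    TraceRepresents O (fun a ↦ f ⟨σ.symm a, hσ a a.2⟩) (σ ε) := by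
  intro a
  obtain ⟨k, hk, hkf⟩ := h ⟨σ.symm a, hσ a a.2⟩
  refine ⟨k, ?_, hkf⟩
  rw [← hk, ← Algebra.trace_eq_of_algEquiv σ.toRatAlgEquiv (ε * _)]
  simp

theorem exists_eq_natCast_mul (hn : n ≠ 0) (h : TraceRepresents O f ε) (hf : ∀ a, f a = 0) :
    ∃ δ ∈ codifferent O, ε = n * δ := by
  have hnM : (n : M) ≠ 0 := Nat.cast_ne_zero.mpr hn
  refine ⟨(n : M)⁻¹ * ε, fun y hy ↦ ?_, by field_simp⟩
  obtain ⟨k, hk, hk0⟩ := h ⟨y, hy⟩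
  obtain ⟨m, rfl⟩ := (ZMod.intCast_zmod_eq_zero_iff_dvd k n).mp (hk0.trans (hf _))
  refine ⟨m, ?_⟩
  rw [show (n : M)⁻¹ * ε * y = (n : ℚ)⁻¹ • (ε * y) by rw [Rat.smul_def]; push_cast; ring,
    map_smul, smul_eq_mul, hk]
  push_cast
  field_simp

end TraceRepresents

end NumberField

/-- Abstract form of the refined Weil pairing construction.  Let `O` be an order in a number
field `M` (stable under the Rosati involution `σ`), `O*` its codifferent, `n > 0`, and let
`G` (playing the role of `A[n]` for a principally polarized abelian variety) be an
`O`-module equipped with a `ℤ`-bilinear alternating pairing `e : G × G → ℤ/n` (the Weil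
pairing) for which `a` and `σ a` are adjoint.  Then for all `P, Q ∈ G`:
the map `a ↦ e(P, a Q)` is `ℤ`-linear on `O/n`; there is an `ε = 𝕖_n(P,Q) ∈ O*`, unique
modulo `n O*`, with `e(P, aQ) = Tr_{M/ℚ}(ε a) mod n` for all `a ∈ O`; and the resulting
pairing is skew-Hermitian: `𝕖_n(P,Q) = -σ(𝕖_n(Q,P))` in `O*/n`. -/
theorem stmt18 (M : Type*) [Field M] [NumberField M]
    (O : Subalgebra ℤ M) [Module.Finite ℤ O]
    (hfull : ∀ x : M, ∃ (k : ℤ) (y : O), k ≠ 0 ∧ (k : M) * x = (y : M))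
    (σ : M ≃+* M) (hσO : ∀ x ∈ O, σ x ∈ O)
    (n : ℕ) (hn : 0 < n)
    (G : Type*) [AddCommGroup G] [Module O G]
    (e : G → G → ZMod n)
    (he1 : ∀ P Q T : G, e (P + Q) T = e P T + e Q T)
    (he2 : ∀ P Q T : G, e P (Q + T) = e P Q + e P T)
    (halt : ∀ P : G, e P P = 0)
    (hadj : ∀ (a : O) (P Q : G), e (a • P) Q = e P ((⟨σ a, hσO a a.2⟩ : O) • Q)) :
    let Ostar : Set M := {x | ∀ y ∈ O, ∃ k : ℤ, Algebra.trace ℚ M (x * y) = (k : ℚ)}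
    let Repr : G → G → M → Prop := fun P Q ε =>
      ε ∈ Ostar ∧ ∀ a : O, ∃ k : ℤ,
        Algebra.trace ℚ M (ε * (a : M)) = (k : ℚ) ∧ (k : ZMod n) = e P (a • Q)
    -- `a ↦ e(P, a·Q)` is `ℤ`-linear and factors through `O/n`
    (∀ (P Q : G) (a b : O), e P ((a + b) • Q) = e P (a • Q) + e P (b • Q)) ∧
    (∀ (P Q : G) (a : O), e P (((n : ℤ) • a) • Q) = 0) ∧
    -- existence and uniqueness modulo `n·O*` of `𝕖_n(P,Q) ∈ O*/n`
    (∀ P Q : G, ∃ ε : M, Repr P Q ε) ∧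
    (∀ (P Q : G) (ε ε' : M), Repr P Q ε → Repr P Q ε' →
      ∃ δ ∈ Ostar, ε - ε' = (n : M) * δ) ∧
    -- the pairing `𝕖_n` is skew-Hermitian
    (∀ (P Q : G) (ε ε' : M), Repr P Q ε → Repr Q P ε' →
      ∃ δ ∈ Ostar, ε + σ ε' = (n : M) * δ) := by
  intro Ostar Repr
  have := O.isLattice_toSubmodule hfull
  let φ (P Q : G) : O →+ ZMod n := (AddMonoidHom.mk' (e P) (he2 P)).comp ((smulAddHom O G).flip Q)
  refine ⟨fun P Q ↦ map_add (φ P Q), fun P Q a ↦ (map_zsmul (φ P Q) n a).trans (by simp),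
    fun P Q ↦ ?_, fun P Q ε ε' hε hε' ↦ ?_, fun P Q ε ε' hε hε' ↦ ?_⟩
  · obtain ⟨ε, hε⟩ := exists_trace_mul_intCast_eq_of_isLattice (Subalgebra.toSubmodule O) (φ P Q)
    exact ⟨ε, TraceRepresents.mem_codifferent hε, hε⟩
  · exact (TraceRepresents.sub hε.2 hε'.2).exists_eq_natCast_mul hn.ne' fun a ↦ sub_self _
  · have hσO' := σ.symm_apply_mem_of_forall_apply_mem hσO
    have hsum := TraceRepresents.add hε.2 (TraceRepresents.map_ringEquiv σ hσO' hε'.2)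
    refine hsum.exists_eq_natCast_mul hn.ne' fun a ↦ ?_
    have hadj' := hadj ⟨σ.symm a, hσO' a a.2⟩ P Q
    simp only [σ.apply_symm_apply] at hadj'
    simp only [Pi.add_apply, eq_neg_swap_of_alternating e he1 he2 halt Q, hadj', add_neg_cancel]
end
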